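/- Coupling a decomposed objective-space: Let I be a finite index set and, for each i ∈ I, let A_i, B_i ⊆ ℝ^K be finite sets. Then ND(⋃_{i ∈ I} (A_i + B_i)) = ND(⋃_{i ∈ I} ND(ND(A_i) + ND(B_i))), where A + B denotes the Minkowski sum {a + b : a ∈ A, b ∈ B}. Hence, if the set of path weights of a network decomposes over a layer as ⋃_{i} (A_i + B_i), the Pareto frontier equals the nondominated set of the union of the couplings of the nondominated top-down and bottom-up label sets. -/

import Mathlib

open Pointwise

/-- `y` dominates `y'`: componentwise at least as large and not equal. -/
def dominates {K : ℕ} (y y' : Fin K → ℝ) : Prop :=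
  (∀ k, y' k ≤ y k) ∧ y ≠ y'

/-- The nondominated subset of `S`. -/
def ND {K : ℕ} (S : Set (Fin K → ℝ)) : Set (Fin K → ℝ) :=
  {y ∈ S | ¬ ∃ y' ∈ S, dominates y' y}

/-!
Nondominated points are exactly the maximal elements for the componentwise order. Every point
of `⋃ i, (A i + B i)` lies below a point of `⋃ i, ND (ND (A i) + ND (B i))`: replace `a` and `b`
by nondominated points above them (they exist by finiteness), then their sum by a nondominated
point of `ND (A i) + ND (B i)` above it, using that addition is monotone. Since the second set
is contained in the first, the two sets have the same maximal elements.
-/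

theorem maximal_mem_eq_of_subset_of_forall_exists_le {α : Type*} [PartialOrder α]
    {S T : Set α} (hTS : T ⊆ S) (hcof : ∀ y ∈ S, ∃ z ∈ T, y ≤ z) :
    Maximal (· ∈ S) = Maximal (· ∈ T) := by
  ext y
  constructor
  · intro hy
    obtain ⟨z, hzT, hyz⟩ := hcof y hy.prop
    have hzy : z = y := le_antisymm (hy.2 (hTS hzT) hyz) hyz
    exact hy.mono hTS (hzy ▸ hzT)
  · intro hy
    refine ⟨hTS hy.prop, fun z hzS hyz => ?_⟩
    obtain ⟨w, hwT, hzw⟩ := hcof z hzS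
    exact hzw.trans (hy.2 hwT (hyz.trans hzw))

section ND

variable {K : ℕ}

theorem dominates_iff_lt {y y' : Fin K → ℝ} : dominates y y' ↔ y' < y := by
  rw [dominates, lt_iff_le_and_ne, ne_comm]
  rfl

theorem mem_ND_iff_maximal {S : Set (Fin K → ℝ)} {y : Fin K → ℝ} :
    y ∈ ND S ↔ Maximal (· ∈ S) y := by
  simp only [ND, Set.mem_ofPred_eq, dominates_iff_lt, maximal_iff_forall_gt, not_exists, not_and]
  exact and_congr_right fun _ => ⟨fun h z hyz hz => h z hz hyz, fun h z hz hyz => h hyz hz⟩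

theorem ND_subset (S : Set (Fin K → ℝ)) : ND S ⊆ S := fun _ hy => hy.1

theorem ND_eq_of_subset_of_forall_exists_le {S T : Set (Fin K → ℝ)} (hTS : T ⊆ S)
    (hcof : ∀ y ∈ S, ∃ z ∈ T, y ≤ z) : ND S = ND T := by
  ext y
  rw [mem_ND_iff_maximal, mem_ND_iff_maximal, maximal_mem_eq_of_subset_of_forall_exists_le hTS hcof]

theorem Set.Finite.exists_le_mem_ND {S : Set (Fin K → ℝ)} (hS : S.Finite) {y : Fin K → ℝ}
    (hy : y ∈ S) : ∃ z ∈ ND S, y ≤ z := by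
  obtain ⟨z, hyz, hz⟩ := hS.exists_le_maximal hy
  exact ⟨z, mem_ND_iff_maximal.2 hz, hyz⟩

theorem ND_add_ND_subset_add (A B : Set (Fin K → ℝ)) : ND (ND A + ND B) ⊆ A + B :=
  (ND_subset _).trans (Set.add_subset_add (ND_subset A) (ND_subset B))

theorem exists_le_mem_ND_add_ND {A B : Set (Fin K → ℝ)} (hA : A.Finite) (hB : B.Finite)
    {y : Fin K → ℝ} (hy : y ∈ A + B) : ∃ z ∈ ND (ND A + ND B), y ≤ z := by
  obtain ⟨a, ha, b, hb, rfl⟩ := hy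
  obtain ⟨a', ha', haa'⟩ := hA.exists_le_mem_ND ha
  obtain ⟨b', hb', hbb'⟩ := hB.exists_le_mem_ND hb
  have hfin : (ND A + ND B).Finite :=
    (hA.subset (ND_subset A)).add (hB.subset (ND_subset B))
  obtain ⟨z, hz, habz⟩ := hfin.exists_le_mem_ND (Set.add_mem_add ha' hb')
  exact ⟨z, hz, (add_le_add haa' hbb').trans habz⟩

end ND

theorem ND_decomposed_coupling_general {K : ℕ} {ι : Type*}
    (A B : ι → Set (Fin K → ℝ)) (hA : ∀ i, (A i).Finite) (hB : ∀ i, (B i).Finite) :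
    ND (⋃ i, (A i + B i)) = ND (⋃ i, ND (ND (A i) + ND (B i))) := by
  refine ND_eq_of_subset_of_forall_exists_le
    (Set.iUnion_mono fun i => ND_add_ND_subset_add (A i) (B i)) fun y hy => ?_
  obtain ⟨i, hyi⟩ := Set.mem_iUnion.mp hy
  obtain ⟨z, hz, hyz⟩ := exists_le_mem_ND_add_ND (hA i) (hB i) hyi
  exact ⟨z, Set.mem_iUnion.mpr ⟨i, hz⟩, hyz⟩

/-- **Coupling a decomposed objective-space.**  For a finite index set `ι` and finite
sets `A i, B i ⊆ ℝ^K`,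
`ND(⋃ i, (A i + B i)) = ND(⋃ i, ND(ND(A i) + ND(B i)))`,
where `+` is the Minkowski sum. -/
theorem ND_decomposed_coupling {K : ℕ} {ι : Type*} [Finite ι]
    (A B : ι → Set (Fin K → ℝ)) (hA : ∀ i, (A i).Finite) (hB : ∀ i, (B i).Finite) :
    ND (⋃ i, (A i + B i)) = ND (⋃ i, ND (ND (A i) + ND (B i))) :=
  ND_decomposed_coupling_general A B hA hB
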